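/- Let k be a finite field and r ∈ k^× a nonzero element. If the word α₁α₂…α_l lies in A_r, then the word α₁…α_{l−1} (obtained by deleting the last letter) lies in C_r, and the word α₂…α_l (obtained by deleting the first letter) lies in A_r if and only if α₁ = r + r⁻¹. -/

import Mathlib

/-- The monoid homomorphism π sending a word α₁…α_l over k to the matrix product
[[0,1],[−1,α₁]] ⋯ [[0,1],[−1,α_l]]. -/
def piWord {k : Type*} [Field k] (w : List k) : Matrix (Fin 2) (Fin 2) k :=
  (w.map fun α => !![0, 1; -1, α]).prod

/-- A_r : words w with π(w) = [[a,b],[c,d]] satisfying d = b·r and b ≠ 0. -/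
def Ar {k : Type*} [Field k] (r : k) : Set (List k) :=
  {w | piWord w 1 1 = piWord w 0 1 * r ∧ piWord w 0 1 ≠ 0}

/-!
Write π(w) = [[a,b],[c,d]], so that w ∈ A_r says that the second column (b,d) of π(w) is a nonzero
multiple of (1,r). Appending a letter β turns that column into (a,c) + β(b,d); if both u and uβ
were in A_r, both columns of π(u) would be proportional to (1,r), contradicting det π(u) = 1.
Prepending α turns (b,d) into (d, αd − b); when w ∈ A_r, the condition αw ∈ A_r reads
αbr − b = br², i.e. α = r + r⁻¹, and conversely.
-/

section piWord

variable {k : Type*} [Field k]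

lemma piWord_cons (a : k) (w : List k) : piWord (a :: w) = !![0, 1; -1, a] * piWord w := by
  simp [piWord]

lemma piWord_concat (w : List k) (a : k) : piWord (w ++ [a]) = piWord w * !![0, 1; -1, a] := by
  simp [piWord]

lemma det_piWord (w : List k) : (piWord w).det = 1 := by
  induction w with
  | nil => simp [piWord]
  | cons a w ih => rw [piWord_cons, Matrix.det_mul, ih, Matrix.det_fin_two_of]; ring

lemma piWord_cons_zero_one (a : k) (w : List k) : piWord (a :: w) 0 1 = piWord w 1 1 := by
  simp [piWord_cons, Matrix.mul_apply]

lemma piWord_cons_one_one (a : k) (w : List k) :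
    piWord (a :: w) 1 1 = a * piWord w 1 1 - piWord w 0 1 := by
  simp [piWord_cons, Matrix.mul_apply, sub_eq_neg_add]

lemma piWord_concat_zero_one (w : List k) (a : k) :
    piWord (w ++ [a]) 0 1 = piWord w 0 0 + a * piWord w 0 1 := by
  simp [piWord_concat, Matrix.mul_apply, mul_comm]

lemma piWord_concat_one_one (w : List k) (a : k) :
    piWord (w ++ [a]) 1 1 = piWord w 1 0 + a * piWord w 1 1 := by
  simp [piWord_concat, Matrix.mul_apply, mul_comm]

lemma not_mem_Ar_of_concat_mem {r a : k} {w : List k} (h : w ++ [a] ∈ Ar r) : w ∉ Ar r := by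
  rintro ⟨hw, -⟩
  obtain ⟨h, -⟩ := h
  rw [piWord_concat_zero_one, piWord_concat_one_one, hw] at h
  have hdet := det_piWord w
  rw [Matrix.det_fin_two, hw] at hdet
  exact one_ne_zero (by linear_combination -hdet - piWord w 0 1 * h)

lemma mem_Ar_iff_of_cons_mem {r a : k} {w : List k} (hr : r ≠ 0) (h : a :: w ∈ Ar r) :
    w ∈ Ar r ↔ a = r + r⁻¹ := by
  obtain ⟨h11, h01⟩ := h
  rw [piWord_cons_one_one, piWord_cons_zero_one] at h11
  rw [piWord_cons_zero_one] at h01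
  constructor
  · rintro ⟨hw, hb⟩
    rw [hw] at h11
    field_simp
    exact mul_left_cancel₀ hb (by linear_combination h11)
  · rintro rfl
    have hw : piWord w 1 1 = piWord w 0 1 * r := by
      field_simp at h11
      linear_combination h11
    exact ⟨hw, fun hb => h01 (by rw [hw, hb, zero_mul])⟩

end piWord

theorem stmt3_general {k : Type*} [Field k] (r : k) (hr : r ≠ 0)
    (α₁ : k) (w : List k) (h : α₁ :: w ∈ Ar r) :
    (α₁ :: w).dropLast ∉ Ar r ∧ (w ∈ Ar r ↔ α₁ = r + r⁻¹) := by
  refine ⟨?_, mem_Ar_iff_of_cons_mem hr h⟩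
  rw [← List.dropLast_append_getLast (List.cons_ne_nil α₁ w)] at h
  exact not_mem_Ar_of_concat_mem h

theorem stmt3 {k : Type*} [Field k] [Fintype k] (r : k) (hr : r ≠ 0)
    (α₁ : k) (w : List k) (h : α₁ :: w ∈ Ar r) :
    (α₁ :: w).dropLast ∉ Ar r ∧ (w ∈ Ar r ↔ α₁ = r + r⁻¹) :=
  stmt3_general r hr α₁ w h
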